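/- (New rule for classical RB deletion, Figure 10) Suppose in a red-black tree the node x is the black root of a deficient subtree and its black sibling y has two red children. Then applying the described transformation — recoloring and a rotation at the common parent of x and y so that the new root of the rotated subtree takes the former parent's color and its two children are black — yields a subtree with the same inorder traversal satisfying all red-black properties, in which the number of black nodes on every path from its root to an external node equals the number before the deletion; the deficiency is fully resolved. -/

import Mathlib

inductive Color where
  | red : Color
  | black : Color
deriving DecidableEq

inductive RBTree (α : Type) where
  | nil : RBTree α
  | node : Color → RBTree α → α → RBTree α → RBTree α

namespace RBTree

variable {α : Type}

/-- The color of a tree's root; external (nil) positions count as black. -/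
def color : RBTree α → Color
  | .nil => Color.black
  | .node c _ _ _ => c

/-- Inorder traversal of the keys. -/
def inorder : RBTree α → List α
  | .nil => []
  | .node _ l k r => inorder l ++ k :: inorder r

/-- `BH t n`: every path from the root of `t` to an external node contains
exactly `n` black nodes (property (3)). -/
inductive BH : RBTree α → ℕ → Prop where
  | nil : BH RBTree.nil 0
  | red {l r : RBTree α} {k : α} {n : ℕ} :
      BH l n → BH r n → BH (RBTree.node Color.red l k r) n
  | black {l r : RBTree α} {k : α} {n : ℕ} :
      BH l n → BH r n → BH (RBTree.node Color.black l k r) (n + 1)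

/-- Property (2): every red node has black children (equivalently, a red node
never has a red parent). -/
def NoRedRed : RBTree α → Prop
  | .nil => True
  | .node c l _ r =>
      (c = Color.red → color l = Color.black ∧ color r = Color.black) ∧
      NoRedRed l ∧ NoRedRed r

/-- The 2-3 condition: no node has two red children. -/
def No2Red : RBTree α → Prop
  | .nil => True
  | .node _ l _ r =>
      ¬(color l = Color.red ∧ color r = Color.red) ∧ No2Red l ∧ No2Red r

/-- A red-black tree: black root, no red-red violation, uniform black counts. -/
def IsRB (t : RBTree α) : Prop :=
  color t = Color.black ∧ NoRedRed t ∧ ∃ n, BH t n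

/-- A 2-3 red-black tree: a red-black tree where no node has two red children. -/
def Is23RB (t : RBTree α) : Prop := IsRB t ∧ No2Red t

/-- Recolor the root black. -/
def setBlack : RBTree α → RBTree α
  | .nil => .nil
  | .node _ l k r => .node Color.black l k r

/-- `Occurs s t`: `s` occurs as a subtree of `t`. -/
inductive Occurs : RBTree α → RBTree α → Prop where
  | refl (t : RBTree α) : Occurs t t
  | left {s l : RBTree α} (c : Color) (k : α) (r : RBTree α) :
      Occurs s l → Occurs s (RBTree.node c l k r)
  | right {s r : RBTree α} (c : Color) (k : α) (l : RBTree α) :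
      Occurs s r → Occurs s (RBTree.node c l k r)

/-- `Replace s s' t t'`: `t'` is obtained from `t` by replacing one
occurrence of the subtree `s` by `s'`. -/
inductive Replace (s s' : RBTree α) : RBTree α → RBTree α → Prop where
  | here : Replace s s' s s'
  | left {l l' : RBTree α} (c : Color) (k : α) (r : RBTree α) :
      Replace s s' l l' → Replace s s' (RBTree.node c l k r) (RBTree.node c l' k r)
  | right {r r' : RBTree α} (c : Color) (k : α) (l : RBTree α) :
      Replace s s' r r' → Replace s s' (RBTree.node c l k r) (RBTree.node c l k r')

/-- The list of black-node counts along all root-to-external paths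
(in left-to-right order of the external nodes). -/
def bpaths : RBTree α → List ℕ
  | .nil => [0]
  | .node c l _ r =>
      (bpaths l ++ bpaths r).map (fun m => m + if c = Color.black then 1 else 0)

/-- Height: the maximum number of edges on a path from the root to an external node. -/
def height : RBTree α → ℕ
  | .nil => 0
  | .node _ l _ r => max (height l) (height r) + 1

/-- Number of internal nodes. -/
def size : RBTree α → ℕ
  | .nil => 0
  | .node _ l _ r => size l + size r + 1

/-!
After the rotation, the old parent (now black) sits above `x`, restoring the black node `x` was
missing, while the near nephew keeps its black height below it. The far nephew, turned black,
takes over the black that `y` contributed on its side. Both children of the new root are black,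
so the root may keep the parent's color `cp`, whatever it is.
-/

theorem inorder_rotate (c₁ c₂ c₃ c₄ : Color) (t₁ t₂ t₃ : RBTree α) (k₁ k₂ : α) :
    inorder (node c₁ (node c₂ t₁ k₁ t₂) k₂ t₃) =
      inorder (node c₃ t₁ k₁ (node c₄ t₂ k₂ t₃)) := by
  simp [inorder]

theorem noRedRed_node_of_color_black {c : Color} {l r : RBTree α} {k : α}
    (hl : color l = Color.black) (hr : color r = Color.black)
    (hlrr : NoRedRed l) (hrrr : NoRedRed r) : NoRedRed (node c l k r) :=
  ⟨fun _ => ⟨hl, hr⟩, hlrr, hrrr⟩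

theorem noRedRed_node_black {l r : RBTree α} {k : α} (hl : NoRedRed l) (hr : NoRedRed r) :
    NoRedRed (node Color.black l k r) :=
  ⟨nofun, hl, hr⟩

theorem BH.node_of_children (c : Color) {l r : RBTree α} {k : α} {n : ℕ}
    (hl : BH l n) (hr : BH r n) :
    BH (RBTree.node c l k r) (n + if c = Color.black then 1 else 0) := by
  cases c
  · exact BH.red hl hr
  · exact BH.black hl hr

theorem BH.of_node_red {l r : RBTree α} {k : α} {n : ℕ} (h : BH (node Color.red l k r) n) :
    BH l n ∧ BH r n := by
  cases h with
  | red hl hr => exact ⟨hl, hr⟩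

theorem BH.of_node_black {l r : RBTree α} {k : α} {n : ℕ}
    (h : BH (node Color.black l k r) (n + 1)) : BH l n ∧ BH r n := by
  cases h with
  | black hl hr => exact ⟨hl, hr⟩

end RBTree

open RBTree

theorem new_rule_two_red_nephews_general
    {α : Type} (cp : Color) (x a b c2 d : RBTree α) (kp ky ak ck : α) (n : ℕ)
    (hxrr : NoRedRed x) (hxbh : BH x n)
    (hyrr : NoRedRed (RBTree.node Color.black (RBTree.node Color.red a ak b) ky
              (RBTree.node Color.red c2 ck d)))
    (hybh : BH (RBTree.node Color.black (RBTree.node Color.red a ak b) ky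
              (RBTree.node Color.red c2 ck d)) (n + 1)) :
    inorder (RBTree.node cp (RBTree.node Color.black x kp (RBTree.node Color.red a ak b)) ky
              (RBTree.node Color.black c2 ck d)) =
      inorder (RBTree.node cp x kp
        (RBTree.node Color.black (RBTree.node Color.red a ak b) ky
          (RBTree.node Color.red c2 ck d))) ∧
    NoRedRed (RBTree.node cp (RBTree.node Color.black x kp (RBTree.node Color.red a ak b)) ky
              (RBTree.node Color.black c2 ck d)) ∧
    BH (RBTree.node cp (RBTree.node Color.black x kp (RBTree.node Color.red a ak b)) ky
              (RBTree.node Color.black c2 ck d))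
      (n + 1 + if cp = Color.black then 1 else 0) := by
  obtain ⟨-, hab_rr, hcd_rr⟩ := hyrr
  obtain ⟨hab_bh, hcd_bh⟩ := hybh.of_node_black
  obtain ⟨hc_bh, hd_bh⟩ := hcd_bh.of_node_red
  refine ⟨(inorder_rotate cp Color.black cp Color.black ..).trans rfl, ?_, ?_⟩
  · exact noRedRed_node_of_color_black rfl rfl
      (noRedRed_node_black hxrr hab_rr) (noRedRed_node_black hcd_rr.2.1 hcd_rr.2.2)
  · exact BH.node_of_children cp (BH.black hxbh hab_bh) (BH.black hc_bh hd_bh)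

/-- New rule for classical RB deletion, Figure 10: in a
red-black tree, `x` is the black root of a deficient subtree (black-height
`n`, one less than its sibling's) and its black sibling
`y = node black (node red a ak b) ky (node red c2 ck d)` has two red
children.  Applying the transformation — a rotation at the common parent
`p = node cp x kp y` with recoloring so that the new root of the rotated
subtree takes the former parent's color `cp` and its two children are black —
yields the subtree `node cp (node black x kp (node red a ak b)) ky
(node black c2 ck d)`, which has the same inorder traversal, satisfies all
red-black properties, and in which the number of black nodes on every path
from its root to an external node equals the number before the deletion,
namely `n + 1` plus one if `cp` is black; the deficiency is fully resolved. -/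
theorem new_rule_two_red_nephews
    {α : Type} (cp : Color) (x a b c2 d : RBTree α) (kp ky ak ck : α) (n : ℕ)
    (hxc : color x = Color.black) (hxrr : NoRedRed x) (hxbh : BH x n)
    (hyrr : NoRedRed (RBTree.node Color.black (RBTree.node Color.red a ak b) ky
              (RBTree.node Color.red c2 ck d)))
    (hybh : BH (RBTree.node Color.black (RBTree.node Color.red a ak b) ky
              (RBTree.node Color.red c2 ck d)) (n + 1)) :
    inorder (RBTree.node cp (RBTree.node Color.black x kp (RBTree.node Color.red a ak b)) ky
              (RBTree.node Color.black c2 ck d)) =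
      inorder (RBTree.node cp x kp
        (RBTree.node Color.black (RBTree.node Color.red a ak b) ky
          (RBTree.node Color.red c2 ck d))) ∧
    NoRedRed (RBTree.node cp (RBTree.node Color.black x kp (RBTree.node Color.red a ak b)) ky
              (RBTree.node Color.black c2 ck d)) ∧
    BH (RBTree.node cp (RBTree.node Color.black x kp (RBTree.node Color.red a ak b)) ky
              (RBTree.node Color.black c2 ck d))
      (n + 1 + if cp = Color.black then 1 else 0) :=
  new_rule_two_red_nephews_general cp x a b c2 d kp ky ak ck n hxrr hxbh hyrr hybh
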